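/- Let E : [R₀, ∞) → ℝ be a nondecreasing differentiable function with E(R₀) > 0, let θ ∈ (0,1), and suppose there exists C > 0 such that E(R) ≤ C (R · ln R · E′(R))^θ for all R ≥ R₀ > e. Then E cannot be bounded, i.e. this situation leads to a contradiction: in fact ∫_{R₀}^{R} dρ/(ρ ln ρ) ≤ C′ E(R₀)^{−(1−θ)/θ} for all R ≥ R₀, contradicting the divergence of ∫ dρ/(ρ ln ρ) = ln ln R − ln ln R₀ → ∞. -/

import Mathlib

/-!
With `α = θ⁻¹ - 1`, the hypothesis reads `E ^ (α + 1) ≤ C ^ θ⁻¹ · R log R · E'`, i.e.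
`(log log R)' · E ^ (α + 1) ≤ C ^ θ⁻¹ · E'`. Hence `α log log R + C ^ θ⁻¹ E(R) ^ (-α)` is
nonincreasing on `[R₀, ∞)`; since `E ^ (-α) > 0`, this bounds `log log R`, which is unbounded.
-/

open Real Set Filter

theorem HasDerivAt.nonneg_of_monotoneOn_Ici {g : ℝ → ℝ} {g' a x : ℝ}
    (hd : HasDerivAt g g' x) (hg : MonotoneOn g (Ici a)) (hx : a ≤ x) : 0 ≤ g' := by
  refine hd.hasDerivWithinAt.nonneg_of_monotoneOn ?_ hg
  refine accPt_principal_iff_nhdsWithin.2 <| (nhdsGT_neBot x).mono <| nhdsWithin_mono _ ?_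
  exact fun y hy => ⟨hx.trans (le_of_lt hy), ne_of_gt hy⟩

theorem Real.rpow_inv_le_mul_of_le_mul_rpow {x y C θ : ℝ} (hx : 0 ≤ x) (hy : 0 ≤ y) (hC : 0 < C)
    (hθ : 0 < θ) (h : x ≤ C * y ^ θ) : x ^ θ⁻¹ ≤ C ^ θ⁻¹ * y := by
  have : (x / C) ^ θ⁻¹ ≤ y :=
    (rpow_inv_le_iff_of_pos (div_nonneg hx hC.le) hy hθ).2 ((div_le_iff₀' hC).2 h)
  rwa [div_rpow hx hC.le, div_le_iff₀' (rpow_pos_of_pos hC _)] at this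

theorem antitoneOn_mul_add_mul_rpow_neg {a α c : ℝ} {E E' L L' : ℝ → ℝ} (hα : 0 < α)
    (hE : ∀ x ∈ Ici a, HasDerivAt E (E' x) x) (hL : ∀ x ∈ Ici a, HasDerivAt L (L' x) x)
    (hpos : ∀ x ∈ Ici a, 0 < E x)
    (hineq : ∀ x ∈ Ioi a, L' x * E x ^ (α + 1) ≤ c * E' x) :
    AntitoneOn (fun x => α * L x + c * E x ^ (-α)) (Ici a) := by
  have hderiv : ∀ x ∈ Ici a, HasDerivAt (fun x => α * L x + c * E x ^ (-α))
      (α * L' x + c * (E' x * (-α) * E x ^ (-α - 1))) x := fun x hx =>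
    ((hL x hx).const_mul α).add (((hE x hx).rpow_const (.inl (hpos x hx).ne')).const_mul c)
  refine antitoneOn_of_hasDerivWithinAt_nonpos (convex_Ici a)
    (fun x hx => (hderiv x hx).continuousAt.continuousWithinAt)
    (fun x hx => (hderiv x (interior_subset hx)).hasDerivWithinAt) fun x hx => ?_
  rw [interior_Ici] at hx
  have hP : 0 < E x ^ (α + 1) := rpow_pos_of_pos (hpos x (mem_Ici_of_Ioi hx)) _
  have hL' : L' x ≤ c * E' x / E x ^ (α + 1) := (le_div_iff₀ hP).2 (hineq x hx)
  have hexp : E x ^ (-α - 1) = (E x ^ (α + 1))⁻¹ := by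
    rw [← rpow_neg (hpos x (mem_Ici_of_Ioi hx)).le, neg_add']
  calc α * L' x + c * (E' x * (-α) * E x ^ (-α - 1))
      = α * (L' x - c * E' x / E x ^ (α + 1)) := by rw [hexp]; ring
    _ ≤ 0 := mul_nonpos_of_nonneg_of_nonpos hα.le (sub_nonpos.2 hL')

theorem not_antitoneOn_add_of_tendsto_atTop {f g : ℝ → ℝ} {a : ℝ} (hf : Tendsto f atTop atTop)
    (hg : ∀ x ∈ Ici a, 0 ≤ g x) : ¬AntitoneOn (fun x => f x + g x) (Ici a) := by
  intro hanti
  obtain ⟨x, hfx, hax⟩ :=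
    ((hf.eventually_gt_atTop (f a + g a)).and (eventually_ge_atTop a)).exists
  linarith [hanti self_mem_Ici hax hax, hg x hax]

/-- Differential inequality argument: there is no nondecreasing differentiable
`E : [R₀, ∞) → ℝ` with `E(R₀) > 0`, `R₀ > e`, satisfying
`E(R) ≤ C (R ln R E'(R))^θ` for all `R ≥ R₀`, where `θ ∈ (0,1)` and `C > 0`. -/
theorem no_sublogarithmic_growth (E E' : ℝ → ℝ) (R₀ θ C : ℝ)
    (hR₀ : Real.exp 1 < R₀)
    (hmono : MonotoneOn E (Set.Ici R₀))
    (hderiv : ∀ R ∈ Set.Ici R₀, HasDerivAt E (E' R) R)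
    (hpos : 0 < E R₀)
    (hθ0 : 0 < θ) (hθ1 : θ < 1) (hC : 0 < C)
    (hineq : ∀ R ∈ Set.Ici R₀, E R ≤ C * (R * Real.log R * E' R) ^ θ) :
    False := by
  have hRpos : ∀ R ∈ Ici R₀, 0 < R := fun R hR => (exp_pos 1).trans (hR₀.trans_le hR)
  have hlog : ∀ R ∈ Ici R₀, 0 < log R := fun R hR =>
    log_pos ((one_lt_exp_iff.2 one_pos).trans (hR₀.trans_le hR))
  have hE : ∀ R ∈ Ici R₀, 0 < E R := fun R hR => hpos.trans_le (hmono self_mem_Ici hR hR)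
  have hloglog : ∀ R ∈ Ici R₀, HasDerivAt (fun x => log (log x)) (R⁻¹ / log R) R := fun R hR =>
    (hasDerivAt_log (hRpos R hR).ne').log (hlog R hR).ne'
  set α := θ⁻¹ - 1
  have hα : 0 < α := sub_pos.2 ((one_lt_inv₀ hθ0).2 hθ1)
  have hdecay : ∀ R ∈ Ioi R₀, R⁻¹ / log R * E R ^ (α + 1) ≤ C ^ θ⁻¹ * E' R := by
    intro R (hR : R₀ < R)
    have := hRpos R hR.le
    have := hlog R hR.le
    have hE' := (hderiv R hR.le).nonneg_of_monotoneOn_Ici hmono hR.le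
    calc R⁻¹ / log R * E R ^ (α + 1)
        ≤ R⁻¹ / log R * (C ^ θ⁻¹ * (R * log R * E' R)) := by
          rw [sub_add_cancel]
          gcongr
          exact rpow_inv_le_mul_of_le_mul_rpow (hE R hR.le).le (by positivity) hC hθ0
            (hineq R hR.le)
      _ = C ^ θ⁻¹ * E' R := by field_simp
  refine not_antitoneOn_add_of_tendsto_atTop
    ((tendsto_log_atTop.comp tendsto_log_atTop).const_mul_atTop hα)
    (fun R hR => by have := hE R hR; positivity)
    (antitoneOn_mul_add_mul_rpow_neg hα hderiv hloglog hE hdecay)
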